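/- arXiv:1706.01949 — 2 statements merged into one kernel-verified Lean document; each statement's English description precedes it below -/
import Mathlib

section
/- Let S ∈ ℝ^{J×K}, A ∈ ℝ^{M×K}, and b ∈ ℝ^K, and suppose that the only ξ ∈ ℝ^K with ξ ≥ 0 and Sξ = 0 is ξ = 0. Then there exist scalars ρ > 0 and τ > 0 such that the (K+1)×(K+1) block matrix [[ρSᵀS − AᵀA, −½b], [−½bᵀ, τ]] is strictly copositive. (In particular, the dual copositive program associated with the robust quadratic objective admits a Slater point.) -/
/-!
On the compact slice `{ξ ≥ 0, ‖ξ‖ = 1}` the form `‖Sξ‖²` is positive by the hypothesis on `S`,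
so by homogeneity `ρ ‖Sξ‖²` dominates `‖Aξ‖² + (bᵀξ)² / 4` on the nonnegative orthant minus `0`
once `ρ` is large. With `τ = 1`, completing the square in the last coordinate `t` writes the
quadratic form as `ρ ‖Sξ‖² - ‖Aξ‖² - (bᵀξ)² / 4 + (t - bᵀξ / 2)²`, which is positive for
`ξ ≠ 0`, and equals `t² > 0` when `ξ = 0`.
-/

open Matrix

/-- A symmetric matrix `M` is strictly copositive if `ξᵀ M ξ > 0` for all entrywise
nonnegative `ξ ≠ 0`. -/
def IsStrictCopositive {n : Type*} [Fintype n] (M : Matrix n n ℝ) : Prop :=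
  ∀ ξ : n → ℝ, (∀ i, 0 ≤ ξ i) → ξ ≠ 0 → 0 < ξ ⬝ᵥ M.mulVec ξ

theorem exists_lt_mul_of_pos_on_cone {E : Type*} [NormedAddCommGroup E] [NormedSpace ℝ E]
    [ProperSpace E] {K : Set E} (hK : IsClosed K) (hK_smul : ∀ c : ℝ, 0 < c → ∀ x ∈ K, c • x ∈ K)
    {f g : E → ℝ} {p : ℕ} (hf : Continuous f) (hg : Continuous g)
    (hf_hom : ∀ c : ℝ, 0 < c → ∀ x, f (c • x) = c ^ p * f x)
    (hg_hom : ∀ c : ℝ, 0 < c → ∀ x, g (c • x) = c ^ p * g x)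
    (hf_pos : ∀ x ∈ K, x ≠ 0 → 0 < f x) :
    ∃ ρ : ℝ, 0 < ρ ∧ ∀ x ∈ K, x ≠ 0 → g x < ρ * f x := by
  set C := K ∩ Metric.sphere (0 : E) 1
  have hC_pos : ∀ u ∈ C, 0 < f u := fun u hu =>
    hf_pos u hu.1 (ne_zero_of_mem_unit_sphere (⟨u, hu.2⟩ : Metric.sphere (0 : E) 1))
  obtain ⟨B, hB⟩ := (isCompact_sphere (0 : E) 1).inter_left hK |>.exists_bound_of_continuousOn
    (hg.continuousOn.div hf.continuousOn fun u hu => (hC_pos u hu).ne')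
  have hC : ∀ u ∈ C, g u < (|B| + 1) * f u := fun u hu => by
    have hratio : g u / f u < |B| + 1 :=
      ((le_abs_self _).trans (hB u hu)).trans_lt (by linarith [le_abs_self B])
    rwa [div_lt_iff₀ (hC_pos u hu)] at hratio
  refine ⟨|B| + 1, by positivity, fun x hx hx0 => ?_⟩
  have hnorm : 0 < ‖x‖ := norm_pos_iff.mpr hx0
  have hu : ‖x‖⁻¹ • x ∈ C :=
    ⟨hK_smul _ (inv_pos.mpr hnorm) x hx, by simp [norm_smul, hnorm.ne']⟩
  have hx_eq : x = ‖x‖ • ‖x‖⁻¹ • x := by rw [smul_smul, mul_inv_cancel₀ hnorm.ne', one_smul]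
  rw [hx_eq, hf_hom _ hnorm, hg_hom _ hnorm, mul_left_comm]
  exact mul_lt_mul_of_pos_left (hC _ hu) (by positivity)

theorem continuous_dotProduct_mulVec_self {m n : Type*} [Fintype m] [Fintype n]
    (S : Matrix m n ℝ) : Continuous fun x => S *ᵥ x ⬝ᵥ S *ᵥ x :=
  have hS : Continuous fun x => S *ᵥ x := continuous_const.matrix_mulVec continuous_id
  hS.dotProduct hS

theorem dotProduct_mulVec_self_smul {m n R : Type*} [Fintype m] [Fintype n] [CommRing R]
    (S : Matrix m n R) (c : R) (x : n → R) :
    S *ᵥ (c • x) ⬝ᵥ S *ᵥ (c • x) = c ^ 2 * (S *ᵥ x ⬝ᵥ S *ᵥ x) := by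
  simp only [mulVec_smul, dotProduct_smul, smul_dotProduct, smul_eq_mul]
  ring

theorem dotProduct_transpose_mul_self_mulVec {m n R : Type*} [Fintype m] [Fintype n] [CommRing R]
    (S : Matrix m n R) (x : n → R) : x ⬝ᵥ (Sᵀ * S) *ᵥ x = S *ᵥ x ⬝ᵥ S *ᵥ x := by
  rw [← mulVec_mulVec, dotProduct_mulVec, vecMul_transpose]

theorem dotProduct_fromBlocks_border_mulVec {n R : Type*} [Fintype n] [Field R] [NeZero (2 : R)]
    (M : Matrix n n R) (b : n → R) (τ : R) (x : n → R) (y : Unit → R) :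
    (x ⊕ᵥ y) ⬝ᵥ fromBlocks M (of fun i (_ : Unit) => -(b i) / 2) (of fun (_ : Unit) j => -(b j) / 2)
        (of fun (_ : Unit) (_ : Unit) => τ) *ᵥ (x ⊕ᵥ y) =
      x ⬝ᵥ M *ᵥ x - y () * (b ⬝ᵥ x) + τ * y () ^ 2 := by
  have hB : x ⬝ᵥ (of fun i (_ : Unit) => -(b i) / 2) *ᵥ y = -(y () * (b ⬝ᵥ x)) / 2 := by
    simp only [dotProduct, mulVec, of_apply, Fintype.sum_unique, PUnit.default_eq_unit,
      Finset.mul_sum, Finset.sum_div, ← Finset.sum_neg_distrib]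
    exact Finset.sum_congr rfl fun _ _ => by ring
  have hC : y ⬝ᵥ (of fun (_ : Unit) j => -(b j) / 2) *ᵥ x = -(y () * (b ⬝ᵥ x)) / 2 := by
    simp only [dotProduct, mulVec, of_apply, Fintype.sum_unique, PUnit.default_eq_unit,
      Finset.mul_sum, Finset.sum_div, ← Finset.sum_neg_distrib]
    exact Finset.sum_congr rfl fun _ _ => by ring
  have hD : y ⬝ᵥ (of fun (_ : Unit) (_ : Unit) => τ) *ᵥ y = τ * y () ^ 2 := by
    simp only [dotProduct, mulVec, of_apply, Fintype.sum_unique, PUnit.default_eq_unit]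
    ring
  rw [fromBlocks_mulVec, Sum.elim_comp_inl, Sum.elim_comp_inr, sumElim_dotProduct_sumElim,
    dotProduct_add, dotProduct_add, hB, hC, hD]
  field_simp
  ring

theorem isStrictCopositive_fromBlocks_border {n : Type*} [Fintype n] (M : Matrix n n ℝ)
    (b : n → ℝ) {τ : ℝ} (hτ : 0 < τ)
    (h : ∀ x : n → ℝ, 0 ≤ x → x ≠ 0 → (b ⬝ᵥ x) ^ 2 < 4 * τ * (x ⬝ᵥ M *ᵥ x)) :
    IsStrictCopositive (fromBlocks M (of fun i (_ : Unit) => -(b i) / 2)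
      (of fun (_ : Unit) j => -(b j) / 2) (of fun (_ : Unit) (_ : Unit) => τ)) := by
  intro ξ hξ hξ0
  rw [← Sum.elim_comp_inl_inr ξ, dotProduct_fromBlocks_border_mulVec]
  set x := ξ ∘ Sum.inl
  set t := ξ (Sum.inr ())
  by_cases hx : x = 0
  · have ht : t ≠ 0 := fun ht => hξ0 <| by
      ext (i | i)
      · exact congrFun hx i
      · exact ht
    simp only [hx, zero_dotProduct, dotProduct_zero, mul_zero, sub_zero, zero_add]
    exact mul_pos hτ (sq_pos_of_ne_zero ht)
  · have hx_lt := h x (fun i => hξ (Sum.inl i)) hx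
    simp only [Function.comp_apply]
    -- `4τ (xᵀMx - t bᵀx + τt²) = (4τ xᵀMx - (bᵀx)²) + (bᵀx - 2τt)²`
    nlinarith [sq_nonneg (b ⬝ᵥ x - 2 * τ * t)]

/-- Existence of a Slater point for the dual copositive program: if the recession cone of
`{ξ ≥ 0 : Sξ = 0}` is trivial, then for suitable `ρ, τ > 0` the block matrix
`[[ρSᵀS − AᵀA, −½b], [−½bᵀ, τ]]` is strictly copositive. -/
theorem slater_point_exists
    (J K M : ℕ)
    (S : Matrix (Fin J) (Fin K) ℝ)
    (A : Matrix (Fin M) (Fin K) ℝ) (b : Fin K → ℝ)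
    (hrec : ∀ ξ : Fin K → ℝ, (∀ i, 0 ≤ ξ i) → S.mulVec ξ = 0 → ξ = 0) :
    ∃ ρ τ : ℝ, 0 < ρ ∧ 0 < τ ∧
      IsStrictCopositive
        (fromBlocks
          (ρ • (Sᵀ * S) - Aᵀ * A)
          (of fun i (_ : Unit) => -(b i) / 2)
          (of fun (_ : Unit) j => -(b j) / 2)
          (of fun (_ : Unit) (_ : Unit) => τ)) := by
  have hS_pos : ∀ x ∈ Set.Ici (0 : Fin K → ℝ), x ≠ 0 → 0 < S *ᵥ x ⬝ᵥ S *ᵥ x := fun x hx hx0 => by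
    simpa using dotProduct_self_star_pos_iff.mpr (mt (hrec x hx) hx0)
  obtain ⟨ρ, hρ, hlt⟩ := exists_lt_mul_of_pos_on_cone (f := fun x => S *ᵥ x ⬝ᵥ S *ᵥ x)
    (g := fun x => A *ᵥ x ⬝ᵥ A *ᵥ x + (b ⬝ᵥ x) ^ 2 / 4) isClosed_Ici
    (fun c hc x hx => Set.mem_Ici.mpr (smul_nonneg hc.le hx)) (continuous_dotProduct_mulVec_self S)
    ((continuous_dotProduct_mulVec_self A).add
      (((continuous_const.dotProduct continuous_id).pow 2).div_const 4))
    (fun c _ x => dotProduct_mulVec_self_smul S c x)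
    (fun c _ x => by
      simp only [dotProduct_mulVec_self_smul, dotProduct_smul, smul_eq_mul]
      ring)
    hS_pos
  refine ⟨ρ, 1, hρ, one_pos, isStrictCopositive_fromBlocks_border _ b one_pos fun x hx hx0 => ?_⟩
  have hx_lt := hlt x hx hx0
  simp only [sub_mulVec, smul_mulVec, dotProduct_sub, dotProduct_smul,
    dotProduct_transpose_mul_self_mulVec, smul_eq_mul] at hx_lt ⊢
  linarith
end

section
/- Let P ∈ ℝ^{p×n} with PᵀP positive definite, W ∈ ℝ^{T×n}, R ∈ ℝ^{n×K}, r ∈ ℝ^n, and suppose there exists y⁺ ∈ ℝ^n with Wy⁺ > 0 componentwise (complete recourse). Let T̄ ∈ ℝ^{T×K}, h ∈ ℝ^T, A ∈ ℝ^{M×K}, b ∈ ℝ^K, c ∈ ℝ, and for each ξ ∈ ℝ^K define the recourse value R(ξ) = inf{ ‖Py‖² + (Rξ + r)ᵀy : y ∈ ℝ^n, Wy ≥ T̄ξ + h }. Then for every nonempty set Ξ ⊆ ℝ^K: sup_{ξ∈Ξ} ( ‖Aξ‖² + bᵀξ + c + R(ξ) ) = sup{ ‖Aξ‖² + bᵀξ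 + c − ¼ (Wᵀθ − Rξ − r)ᵀ (PᵀP)⁻¹ (Wᵀθ − Rξ − r) + (T̄ξ + h)ᵀθ : ξ ∈ Ξ, θ ∈ ℝ^T, θ ≥ 0 }, where both suprema are taken in the extended reals. -/
/-!
For fixed `ξ` the recourse problem is the convex quadratic program `min yᵀQy + qᵀy` subject to
`Wy ≥ d`, with `Q = PᵀP`. Complete recourse provides a Slater point for every right-hand side `d`,
so Lagrangian duality is strong: separating `(0, p)`, for any lower bound `p` of the program, from
the open convex set of pairs `(u, t)` with `d - Wy < u` and `yᵀQy + qᵀy < t` for some `y` yields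
multipliers `θ ≥ 0`. Minimising the Lagrangian by completing the square gives the dual function
`dᵀθ - ¼ (Wᵀθ - q)ᵀ Q⁻¹ (Wᵀθ - q)`, whose maximum is attained and equals the recourse value;
taking the supremum over `ξ` on both sides gives the theorem.
-/

open Matrix Set

theorem nonneg_of_forall_lt_add_mul {a b c : ℝ} (h : ∀ τ, 0 ≤ τ → a < b + τ * c) : 0 ≤ c := by
  by_contra! hc
  have := h (|b - a| / -c) (div_nonneg (abs_nonneg _) (neg_nonneg.2 hc.le))
  rw [div_mul_eq_mul_div, div_neg, mul_div_cancel_right₀ _ hc.ne] at this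
  linarith [le_abs_self (b - a)]

theorem le_of_forall_pos_lt_add_mul {a b c : ℝ} (h : ∀ δ, 0 < δ → a < b + δ * c) : a ≤ b := by
  by_contra! hab
  rcases le_or_gt c 0 with hc | hc
  · linarith [h 1 one_pos]
  · have := h ((a - b) / c) (div_pos (sub_pos.2 hab) hc)
    rw [div_mul_cancel₀ _ hc.ne'] at this
    linarith

theorem LinearMap.apply_prod_eq_dotProduct_add {ι : Type*} [Fintype ι] [DecidableEq ι]
    (φ : (ι → ℝ) × ℝ →ₗ[ℝ] ℝ) (u : ι → ℝ) (t : ℝ) :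
    φ (u, t) = (fun i => φ (Pi.single i 1, 0)) ⬝ᵥ u + t * φ (0, 1) := by
  have hsplit : ((u, t) : (ι → ℝ) × ℝ) = (∑ i, u i • (Pi.single i 1, 0)) + t • (0, 1) := by
    refine Prod.ext ?_ (by simp [Prod.snd_sum])
    ext j
    simp [Prod.fst_sum, Pi.single_apply]
  simp only [hsplit, map_add, map_sum, map_smul, smul_eq_mul, dotProduct, mul_comm]

section LagrangeMultiplier

variable {E ι : Type*}

def perturbationSet (f : E → ℝ) (g : E → ι → ℝ) : Set ((ι → ℝ) × ℝ) :=
  {z | ∃ y, (∀ i, g y i < z.1 i) ∧ f y < z.2}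

variable {f : E → ℝ} {g : E → ι → ℝ}

theorem isOpen_perturbationSet [Finite ι] : IsOpen (perturbationSet f g) := by
  have : perturbationSet f g = ⋃ y, (⋂ i, {z | g y i < z.1 i}) ∩ {z | f y < z.2} := by
    ext z; simp [perturbationSet]
  rw [this]
  exact isOpen_iUnion fun y => (isOpen_iInter_of_finite fun i =>
    isOpen_lt continuous_const (by fun_prop)).inter
    (isOpen_lt continuous_const continuous_snd)

theorem convex_perturbationSet [AddCommGroup E] [Module ℝ E] (hf : ConvexOn ℝ univ f)
    (hg : ∀ i, ConvexOn ℝ univ fun y => g y i) : Convex ℝ (perturbationSet f g) := by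
  rintro z₁ ⟨y₁, hg₁, hf₁⟩ z₂ ⟨y₂, hg₂, hf₂⟩ a b ha hb hab
  have combo {s₁ s₂ t₁ t₂ : ℝ} (h₁ : s₁ < t₁) (h₂ : s₂ < t₂) :
      a * s₁ + b * s₂ < a * t₁ + b * t₂ := by
    have := convex_Ioi (0 : ℝ) (sub_pos.2 h₁) (sub_pos.2 h₂) ha hb hab
    simp only [mem_Ioi, smul_eq_mul] at this
    linarith
  refine ⟨a • y₁ + b • y₂, fun i => ?_, ?_⟩
  · exact ((hg i).2 trivial trivial ha hb hab).trans_lt (by simpa using combo (hg₁ i) (hg₂ i))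
  · exact (hf.2 trivial trivial ha hb hab).trans_lt (by simpa using combo hf₁ hf₂)

theorem add_mem_perturbationSet {z v : (ι → ℝ) × ℝ} (hz : z ∈ perturbationSet f g)
    (hv₁ : ∀ i, 0 ≤ v.1 i) (hv₂ : 0 ≤ v.2) : z + v ∈ perturbationSet f g := by
  obtain ⟨y, hgy, hfy⟩ := hz
  exact ⟨y, fun i => by simpa using add_lt_add_of_lt_of_le (hgy i) (hv₁ i),
    by simpa using add_lt_add_of_lt_of_le hfy hv₂⟩

theorem exists_lagrange_multiplier_of_slater [AddCommGroup E] [Module ℝ E] [Fintype ι]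
    (hf : ConvexOn ℝ univ f) (hg : ∀ i, ConvexOn ℝ univ fun y => g y i)
    {y₀ : E} (hy₀ : ∀ i, g y₀ i < 0) {p : ℝ} (hp : ∀ y, (∀ i, g y i ≤ 0) → p ≤ f y) :
    ∃ θ : ι → ℝ, (∀ i, 0 ≤ θ i) ∧ ∀ y, p ≤ f y + θ ⬝ᵥ g y := by
  classical
  have hp_notMem : ((0 : ι → ℝ), p) ∉ perturbationSet f g := by
    rintro ⟨y, hgy, hfy⟩
    exact (hp y fun i => (hgy i).le).not_gt hfy
  obtain ⟨φ, hφ⟩ := geometric_hahn_banach_point_open (convex_perturbationSet hf hg)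
    isOpen_perturbationSet hp_notMem
  set μ : ι → ℝ := fun i => φ (Pi.single i 1, 0)
  set γ := φ (0, 1)
  have hφ_apply (u : ι → ℝ) (t : ℝ) : φ (u, t) = μ ⬝ᵥ u + t * γ :=
    LinearMap.apply_prod_eq_dotProduct_add φ.toLinearMap u t
  have hz₀ : (g y₀ + 1, f y₀ + 1) ∈ perturbationSet f g :=
    ⟨y₀, fun i => by simp, by simp⟩
  have hμ (i : ι) : 0 ≤ μ i := by
    refine nonneg_of_forall_lt_add_mul (a := φ (0, p)) (b := φ (g y₀ + 1, f y₀ + 1)) fun τ hτ => ?_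
    have hv : ∀ j, 0 ≤ (τ • ((Pi.single i 1 : ι → ℝ), (0 : ℝ))).1 j := fun j =>
      mul_nonneg hτ ((Pi.single_nonneg.2 zero_le_one : (0 : ι → ℝ) ≤ Pi.single i 1) j)
    have hlt := hφ _ (add_mem_perturbationSet hz₀ hv (by simp))
    rwa [map_add, map_smul, smul_eq_mul] at hlt
  have hγ : 0 < γ := by
    -- the Slater point puts `(0, f y₀ + 1)` in the set, strictly above `(0, p)`
    have hlt := hφ (0, f y₀ + 1) ⟨y₀, fun i => by simpa using hy₀ i, lt_add_one _⟩
    rw [hφ_apply, hφ_apply] at hlt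
    have := hp y₀ fun i => (hy₀ i).le
    by_contra! hγ
    simp only [dotProduct_zero, zero_add] at hlt
    nlinarith
  have hφ_le (y : E) : p * γ ≤ μ ⬝ᵥ g y + f y * γ := by
    have key : φ (0, p) ≤ φ (g y, f y) := by
      refine le_of_forall_pos_lt_add_mul (c := φ (1, 1)) fun δ hδ => ?_
      have hmem : (g y, f y) + δ • (1, 1) ∈ perturbationSet f g :=
        ⟨y, fun i => by simpa using hδ, by simpa using hδ⟩
      have hlt := hφ _ hmem
      rwa [map_add, map_smul, smul_eq_mul] at hlt
    simpa [hφ_apply] using key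
  refine ⟨γ⁻¹ • μ, fun i => mul_nonneg (inv_nonneg.2 hγ.le) (hμ i), fun y => ?_⟩
  rw [smul_dotProduct, smul_eq_mul, ← div_eq_inv_mul, ← sub_le_iff_le_add', le_div_iff₀ hγ]
  linarith [hφ_le y]

end LagrangeMultiplier

section QuadraticProgram

variable {m ι : Type*} [Fintype m] [Fintype ι] {Q : Matrix m m ℝ}

theorem Matrix.IsHermitian.dotProduct_mulVec_comm (hQ : Q.IsHermitian) (x y : m → ℝ) :
    x ⬝ᵥ Q *ᵥ y = y ⬝ᵥ Q *ᵥ x := by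
  rw [← dotProduct_transpose_mulVec, ← conjTranspose_eq_transpose_of_trivial, hQ.eq]

theorem Matrix.PosSemidef.convexOn_dotProduct_mulVec (hQ : Q.PosSemidef) :
    ConvexOn ℝ univ fun y : m → ℝ => y ⬝ᵥ Q *ᵥ y := by
  refine ⟨convex_univ, fun x _ y _ a b ha hb hab => ?_⟩
  have hnonneg : 0 ≤ (x - y) ⬝ᵥ Q *ᵥ (x - y) := by
    simpa using hQ.dotProduct_mulVec_nonneg (x - y)
  obtain rfl : b = 1 - a := by linarith
  simp only [mulVec_add, mulVec_smul, mulVec_sub, add_dotProduct, dotProduct_add,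
    smul_dotProduct, dotProduct_smul, sub_dotProduct, dotProduct_sub, smul_eq_mul,
    hQ.isHermitian.dotProduct_mulVec_comm y x] at hnonneg ⊢
  nlinarith [mul_nonneg ha hb, mul_nonneg (mul_nonneg ha hb) hnonneg]

variable [DecidableEq m]

theorem Matrix.PosDef.dotProduct_mulVec_sub_eq (hQ : Q.PosDef) (s y : m → ℝ) :
    y ⬝ᵥ Q *ᵥ y - s ⬝ᵥ y =
      (y - (2⁻¹ : ℝ) • Q⁻¹ *ᵥ s) ⬝ᵥ Q *ᵥ (y - (2⁻¹ : ℝ) • Q⁻¹ *ᵥ s) -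
        4⁻¹ * (s ⬝ᵥ Q⁻¹ *ᵥ s) := by
  have hQs : Q *ᵥ (Q⁻¹ *ᵥ s) = s := by
    rw [mulVec_mulVec, mul_nonsing_inv _ ((isUnit_iff_isUnit_det _).1 hQ.isUnit), one_mulVec]
  simp only [mulVec_sub, mulVec_smul, sub_dotProduct, dotProduct_sub, smul_dotProduct,
    dotProduct_smul, smul_eq_mul, hQs, hQ.isHermitian.dotProduct_mulVec_comm (Q⁻¹ *ᵥ s) y,
    dotProduct_comm _ s]
  ring

theorem Matrix.PosDef.isLeast_dotProduct_mulVec_sub (hQ : Q.PosDef) (s : m → ℝ) :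
    IsLeast (range fun y => y ⬝ᵥ Q *ᵥ y - s ⬝ᵥ y) (-(4⁻¹ * (s ⬝ᵥ Q⁻¹ *ᵥ s))) := by
  refine ⟨⟨(2⁻¹ : ℝ) • Q⁻¹ *ᵥ s, ?_⟩, ?_⟩
  · dsimp only
    rw [hQ.dotProduct_mulVec_sub_eq, sub_self, zero_dotProduct, zero_sub]
  · rintro _ ⟨y, rfl⟩
    have := hQ.posSemidef.dotProduct_mulVec_nonneg (y - (2⁻¹ : ℝ) • Q⁻¹ *ᵥ s)
    simp only [star_trivial] at this
    simp only [hQ.dotProduct_mulVec_sub_eq s y]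
    linarith

variable (Q) in
noncomputable def qpDual (W : Matrix ι m ℝ) (d : ι → ℝ) (q : m → ℝ) (θ : ι → ℝ) : ℝ :=
  d ⬝ᵥ θ - 4⁻¹ * ((Wᵀ *ᵥ θ - q) ⬝ᵥ Q⁻¹ *ᵥ (Wᵀ *ᵥ θ - q))

variable {W : Matrix ι m ℝ} {d : ι → ℝ} {q : m → ℝ}

theorem isLeast_lagrangian_qpDual (hQ : Q.PosDef) (θ : ι → ℝ) :
    IsLeast (range fun y => y ⬝ᵥ Q *ᵥ y + q ⬝ᵥ y + θ ⬝ᵥ (d - W *ᵥ y)) (qpDual Q W d q θ) := by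
  have hL (y : m → ℝ) : y ⬝ᵥ Q *ᵥ y + q ⬝ᵥ y + θ ⬝ᵥ (d - W *ᵥ y) =
      y ⬝ᵥ Q *ᵥ y - (Wᵀ *ᵥ θ - q) ⬝ᵥ y + d ⬝ᵥ θ := by
    simp only [dotProduct_sub, sub_dotProduct, dotProduct_mulVec θ W, ← mulVec_transpose,
      dotProduct_comm d θ]
    ring
  obtain ⟨⟨y, hy⟩, hmin⟩ := hQ.isLeast_dotProduct_mulVec_sub (Wᵀ *ᵥ θ - q)
  refine ⟨⟨y, ?_⟩, ?_⟩
  · simp only [hL] at hy ⊢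
    rw [hy, qpDual]
    ring
  · rintro _ ⟨y, rfl⟩
    have := hmin ⟨y, rfl⟩
    simp only [hL, qpDual] at this ⊢
    linarith

theorem qpDual_le (hQ : Q.PosDef) {θ : ι → ℝ} (hθ : ∀ i, 0 ≤ θ i) {y : m → ℝ}
    (hy : ∀ i, d i ≤ (W *ᵥ y) i) : qpDual Q W d q θ ≤ y ⬝ᵥ Q *ᵥ y + q ⬝ᵥ y := by
  have hL := (isLeast_lagrangian_qpDual hQ θ (W := W) (d := d) (q := q)).2 ⟨y, rfl⟩
  have hθ_pen : θ ⬝ᵥ (d - W *ᵥ y) ≤ 0 :=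
    Finset.sum_nonpos fun i _ => mul_nonpos_of_nonneg_of_nonpos (hθ i) (sub_nonpos.2 (hy i))
  dsimp only at hL
  linarith

theorem exists_le_qpDual (hQ : Q.PosDef) (hslater : ∃ y₀, ∀ i, d i < (W *ᵥ y₀) i) {p : ℝ}
    (hp : ∀ y, (∀ i, d i ≤ (W *ᵥ y) i) → p ≤ y ⬝ᵥ Q *ᵥ y + q ⬝ᵥ y) :
    ∃ θ, (∀ i, 0 ≤ θ i) ∧ p ≤ qpDual Q W d q θ := by
  obtain ⟨y₀, hy₀⟩ := hslater
  obtain ⟨θ, hθ, hL⟩ := exists_lagrange_multiplier_of_slater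
    (f := fun y => y ⬝ᵥ Q *ᵥ y + q ⬝ᵥ y) (g := fun y => d - W *ᵥ y)
    (hQ.posSemidef.convexOn_dotProduct_mulVec.add ((dotProductBilin ℝ ℝ q).convexOn convex_univ))
    (fun i => (convexOn_const (d i) convex_univ).sub
      ((LinearMap.proj i ∘ₗ W.mulVecLin).concaveOn convex_univ))
    (y₀ := y₀) (fun i => sub_neg.2 (hy₀ i)) fun y hy => hp y fun i => sub_nonpos.1 (hy i)
  obtain ⟨⟨y, hy⟩, -⟩ := isLeast_lagrangian_qpDual hQ θ (W := W) (d := d) (q := q)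
  exact ⟨θ, hθ, (hL y).trans_eq hy⟩

theorem isGreatest_qpDual (hQ : Q.PosDef) (hslater : ∃ y₀, ∀ i, d i < (W *ᵥ y₀) i) :
    IsGreatest {z : EReal | ∃ θ, (∀ i, 0 ≤ θ i) ∧ z = qpDual Q W d q θ}
      (sInf {w : EReal | ∃ y, (∀ i, d i ≤ (W *ᵥ y) i) ∧ w = ↑(y ⬝ᵥ Q *ᵥ y + q ⬝ᵥ y)}) := by
  set V := sInf {w : EReal | ∃ y, (∀ i, d i ≤ (W *ᵥ y) i) ∧ w = ↑(y ⬝ᵥ Q *ᵥ y + q ⬝ᵥ y)}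
  have hweak (θ : ι → ℝ) (hθ : ∀ i, 0 ≤ θ i) : (qpDual Q W d q θ : EReal) ≤ V := by
    refine le_sInf ?_
    rintro _ ⟨y, hy, rfl⟩
    exact EReal.coe_le_coe_iff.2 (qpDual_le hQ hθ hy)
  obtain ⟨y₀, hy₀⟩ := hslater
  have hV_top : V ≠ ⊤ :=
    ne_top_of_le_ne_top (EReal.coe_ne_top _) (sInf_le ⟨y₀, fun i => (hy₀ i).le, rfl⟩)
  have hV_bot : V ≠ ⊥ := ne_bot_of_le_ne_bot (EReal.coe_ne_bot _) (hweak 0 fun _ => le_rfl)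
  have hV : (V.toReal : EReal) = V := EReal.coe_toReal hV_top hV_bot
  obtain ⟨θ, hθ, hle⟩ := exists_le_qpDual hQ ⟨y₀, hy₀⟩ (p := V.toReal) fun y hy =>
    EReal.coe_le_coe_iff.1 (hV.trans_le (sInf_le ⟨y, hy, rfl⟩))
  refine ⟨⟨θ, hθ, le_antisymm ?_ (hweak θ hθ)⟩, ?_⟩
  · rw [← hV]
    exact EReal.coe_le_coe_iff.2 hle
  · rintro _ ⟨θ, hθ, rfl⟩
    exact hweak θ hθ

end QuadraticProgram

theorem Matrix.exists_forall_lt_mulVec {m ι : Type*} [Fintype m] [Finite ι] {W : Matrix ι m ℝ}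
    {v : m → ℝ} (hW : ∀ i, 0 < (W *ᵥ v) i) (d : ι → ℝ) : ∃ y, ∀ i, d i < (W *ᵥ y) i := by
  obtain ⟨t, ht⟩ := (Filter.eventually_all.2 fun i =>
    (Filter.tendsto_id.atTop_mul_const (hW i)).eventually_gt_atTop (d i)).exists
  exact ⟨t • v, fun i => by simpa [mulVec_smul] using ht i⟩

theorem two_stage_dualization_general
    (p n T K M : ℕ)
    (P : Matrix (Fin p) (Fin n) ℝ) (hP : (Pᵀ * P).PosDef)
    (W : Matrix (Fin T) (Fin n) ℝ)
    (R : Matrix (Fin n) (Fin K) ℝ) (r : Fin n → ℝ)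
    (hcr : ∃ yplus : Fin n → ℝ, ∀ i, 0 < W.mulVec yplus i)
    (Tb : Matrix (Fin T) (Fin K) ℝ) (h : Fin T → ℝ)
    (A : Matrix (Fin M) (Fin K) ℝ) (b : Fin K → ℝ) (c : ℝ)
    (Ξ : Set (Fin K → ℝ)) :
    sSup {z : EReal | ∃ ξ ∈ Ξ,
        z = ((A.mulVec ξ ⬝ᵥ A.mulVec ξ + b ⬝ᵥ ξ + c : ℝ) : EReal) +
          sInf {w : EReal | ∃ y : Fin n → ℝ,
            (∀ i, (Tb.mulVec ξ + h) i ≤ W.mulVec y i) ∧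
            w = ((P.mulVec y ⬝ᵥ P.mulVec y + (R.mulVec ξ + r) ⬝ᵥ y : ℝ) : EReal)}} =
    sSup {z : EReal | ∃ ξ ∈ Ξ, ∃ θ : Fin T → ℝ, (∀ i, 0 ≤ θ i) ∧
        z = ((A.mulVec ξ ⬝ᵥ A.mulVec ξ + b ⬝ᵥ ξ + c -
          (1 / 4) * ((Wᵀ.mulVec θ - R.mulVec ξ - r) ⬝ᵥ
            (Pᵀ * P)⁻¹.mulVec (Wᵀ.mulVec θ - R.mulVec ξ - r)) +
          (Tb.mulVec ξ + h) ⬝ᵥ θ : ℝ) : EReal)} := by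
  obtain ⟨yplus, hyplus⟩ := hcr
  have hvalue (ξ : Fin K → ℝ) := isGreatest_qpDual (q := R *ᵥ ξ + r) hP
    (exists_forall_lt_mulVec hyplus (Tb *ᵥ ξ + h))
  -- `yᵀ (PᵀP) y = (Py)ᵀ (Py)`
  simp only [← mulVec_mulVec, dotProduct_transpose_mulVec] at hvalue
  have hobj (ξ : Fin K → ℝ) (θ : Fin T → ℝ) :
      ((A *ᵥ ξ ⬝ᵥ A *ᵥ ξ + b ⬝ᵥ ξ + c : ℝ) : EReal) +
          qpDual (Pᵀ * P) W (Tb *ᵥ ξ + h) (R *ᵥ ξ + r) θ =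
        ((A *ᵥ ξ ⬝ᵥ A *ᵥ ξ + b ⬝ᵥ ξ + c - (1 / 4) * ((Wᵀ *ᵥ θ - R *ᵥ ξ - r) ⬝ᵥ
          (Pᵀ * P)⁻¹ *ᵥ (Wᵀ *ᵥ θ - R *ᵥ ξ - r)) + (Tb *ᵥ ξ + h) ⬝ᵥ θ : ℝ) : EReal) := by
    rw [← EReal.coe_add, qpDual, sub_sub]
    congr 1
    ring
  refine csSup_eq_csSup_of_forall_exists_le ?_ ?_
  · rintro _ ⟨ξ, hξ, rfl⟩
    obtain ⟨θ, hθ, hV⟩ := (hvalue ξ).1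
    exact ⟨_, ⟨ξ, hξ, θ, hθ, rfl⟩, by rw [hV, hobj]⟩
  · rintro _ ⟨ξ, hξ, θ, hθ, rfl⟩
    refine ⟨_, ⟨ξ, hξ, rfl⟩, ?_⟩
    rw [← hobj]
    exact add_le_add_right ((hvalue ξ).2 ⟨θ, hθ, rfl⟩) _

/-- Under complete recourse, the worst-case two-stage quadratic objective equals the
supremum of the combined primal-dual objective over the uncertainty set and nonnegative
dual multipliers (values taken in the extended reals). -/
theorem two_stage_dualization
    (p n T K M : ℕ)
    (P : Matrix (Fin p) (Fin n) ℝ) (hP : (Pᵀ * P).PosDef)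
    (W : Matrix (Fin T) (Fin n) ℝ)
    (R : Matrix (Fin n) (Fin K) ℝ) (r : Fin n → ℝ)
    (hcr : ∃ yplus : Fin n → ℝ, ∀ i, 0 < W.mulVec yplus i)
    (Tb : Matrix (Fin T) (Fin K) ℝ) (h : Fin T → ℝ)
    (A : Matrix (Fin M) (Fin K) ℝ) (b : Fin K → ℝ) (c : ℝ)
    (Ξ : Set (Fin K → ℝ)) (hΞ : Ξ.Nonempty) :
    sSup {z : EReal | ∃ ξ ∈ Ξ,
        z = ((A.mulVec ξ ⬝ᵥ A.mulVec ξ + b ⬝ᵥ ξ + c : ℝ) : EReal) +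
          sInf {w : EReal | ∃ y : Fin n → ℝ,
            (∀ i, (Tb.mulVec ξ + h) i ≤ W.mulVec y i) ∧
            w = ((P.mulVec y ⬝ᵥ P.mulVec y + (R.mulVec ξ + r) ⬝ᵥ y : ℝ) : EReal)}} =
    sSup {z : EReal | ∃ ξ ∈ Ξ, ∃ θ : Fin T → ℝ, (∀ i, 0 ≤ θ i) ∧
        z = ((A.mulVec ξ ⬝ᵥ A.mulVec ξ + b ⬝ᵥ ξ + c -
          (1 / 4) * ((Wᵀ.mulVec θ - R.mulVec ξ - r) ⬝ᵥ
            (Pᵀ * P)⁻¹.mulVec (Wᵀ.mulVec θ - R.mulVec ξ - r)) +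
          (Tb.mulVec ξ + h) ⬝ᵥ θ : ℝ) : EReal)} :=
  two_stage_dualization_general p n T K M P hP W R r hcr Tb h A b c Ξ
end
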